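/- arXiv:1712.02569 — 4 statements merged into one kernel-verified Lean document; each statement's English description precedes it below -/
import Mathlib

section
/- For every set A ⊆ ω₁ × ω₁ belonging to the σ-ideal 𝓘 and all sets B₁, …, Bₙ ⊆ ω₁ × ω₁ (n ≥ 1) not belonging to 𝓘, there exist a set S ⊆ ω₁ and a strictly decreasing function f : S → ω₁ whose graph is disjoint from A and intersects each Bᵢ for i = 1, …, n (one may take S finite with exactly n elements). -/
/-!
A set outside `𝓘` has uncountably many uncountable vertical sections or uncountably many
uncountable horizontal sections, and an uncountable subset of `ω₁` is unbounded. For a set `B` of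
the first kind, first coordinates `α` can be chosen outside the countable exceptional set of `A`;
then `B_α \ A_α` is uncountable, so the second coordinate can be taken in it above any prescribed
bound. The second kind is the mirror image under `Prod.swap`. The points for sets of the first kind
go to the upper left of those of the second kind: choose the first coordinates of the first kind
and the second coordinates of the second kind, then the remaining coordinates above these. The
points form a finite antichain in the product order, i.e. the graph of a strictly decreasing
function.
-/
open Cardinal Filter Topology Set

noncomputable section
open Classical

/-- `ω₁`, the first uncountable ordinal, viewed as the linearly ordered type of
all countable ordinals. -/
abbrev Omega1 : Type 1 := ↥(Set.Iio (Cardinal.aleph 1).ord)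

/-- The vertical section `A_α = {β : (α, β) ∈ A}`. -/
def vertSection (A : Set (Omega1 × Omega1)) (α : Omega1) : Set Omega1 :=
  {β | (α, β) ∈ A}

/-- The horizontal section `A^α = {γ : (γ, α) ∈ A}`. -/
def horSection (A : Set (Omega1 × Omega1)) (α : Omega1) : Set Omega1 :=
  {γ | (γ, α) ∈ A}

/-- Membership in the σ-ideal `𝓘`: for all but countably many `α ∈ ω₁` both the
vertical and the horizontal section of `A` at `α` are countable. -/
def MemIdealI (A : Set (Omega1 × Omega1)) : Prop :=
  {α : Omega1 | ¬ ((vertSection A α).Countable ∧ (horSection A α).Countable)}.Countable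

lemma Omega1.countable_Iic (γ : Omega1) : (Iic γ).Countable := by
  have hγ : (Iio (Order.succ γ.1)).Countable := by
    rw [← le_aleph0_iff_set_countable, mk_Iio_ordinal, lift_le_aleph0, ← lt_aleph_one_iff,
      ← lt_ord]
    exact (isSuccLimit_ord (aleph0_le_aleph 1)).succ_lt γ.2
  exact (hγ.preimage Subtype.val_injective).mono fun x (hx : x.1 ≤ γ.1) => Order.lt_succ_of_le hx

lemma Omega1.not_bddAbove_of_not_countable {s : Set Omega1} (hs : ¬ s.Countable) :
    ¬ BddAbove s :=
  fun ⟨γ, hγ⟩ => hs ((countable_Iic γ).mono hγ)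

instance : Nonempty Omega1 := ⟨⟨0, by simpa using Ordinal.omega_pos 1⟩⟩

lemma exists_strictMono_fin_forall_mem {α : Type*} [LinearOrder α] {m : ℕ} (s : Fin m → Set α)
    (hs : ∀ i, ¬ BddAbove (s i)) (γ : α) :
    ∃ d : Fin m → α, StrictMono d ∧ ∀ i, d i ∈ s i ∧ γ < d i := by
  induction m generalizing γ with
  | zero => exact ⟨finZeroElim, fun i => i.elim0, fun i => i.elim0⟩
  | succ m ih =>
    obtain ⟨x, hxs, hγx⟩ := not_bddAbove_iff.mp (hs 0) γ
    obtain ⟨d, hd, hds⟩ := ih (fun i => s i.succ) (fun i => hs i.succ) x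
    refine ⟨Fin.cons x d, Fin.strictMono_cons.mpr ⟨fun j => (hds j).2, hd⟩, Fin.cases ?_ ?_⟩
    · exact ⟨hxs, hγx⟩
    · exact fun j => ⟨(hds j).1, hγx.trans (hds j).2⟩

lemma exists_strictMono_forall_mem {ι α : Type*} [LinearOrder ι] [Finite ι] [LinearOrder α]
    (s : ι → Set α) (hs : ∀ i, ¬ BddAbove (s i)) (γ : α) :
    ∃ d : ι → α, StrictMono d ∧ ∀ i, d i ∈ s i ∧ γ < d i := by
  have := Fintype.ofFinite ι
  let e := Fintype.orderIsoFinOfCardEq ι rfl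
  obtain ⟨d, hd, hds⟩ := exists_strictMono_fin_forall_mem (s ∘ e) (fun i => hs (e i)) γ
  exact ⟨d ∘ e.symm, hd.comp e.symm.strictMono, fun i => by simpa using hds (e.symm i)⟩

lemma pairwise_not_le_of_strictMono_of_strictAnti {ι α β : Type*} [LinearOrder ι] [Preorder α]
    [Preorder β] {q : ι → α × β} (h₁ : StrictMono fun i => (q i).1)
    (h₂ : StrictAnti fun i => (q i).2) : Pairwise fun i j => ¬ q i ≤ q j := by
  intro i j hij hle
  rcases hij.lt_or_gt with h | h
  · exact (h₂ h).not_ge hle.2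
  · exact (h₁ h).not_ge hle.1

lemma injective_fst_of_pairwise_not_le {κ α β : Type*} [Preorder α] [LinearOrder β]
    {q : κ → α × β} (hq : Pairwise fun k l => ¬ q k ≤ q l) : Function.Injective fun k => (q k).1 := by
  intro k l h
  by_contra hkl
  rcases le_total (q k).2 (q l).2 with h₂ | h₂
  · exact hq hkl ⟨h.le, h₂⟩
  · exact hq (Ne.symm hkl) ⟨h.ge, h₂⟩

lemma strictAntiOn_of_pairwise_not_le {κ α β : Type*} [Preorder α] [LinearOrder β]
    {q : κ → α × β} (hq : Pairwise fun k l => ¬ q k ≤ q l) {f : α → β}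
    (hf : ∀ k, f (q k).1 = (q k).2) : StrictAntiOn f (range fun k => (q k).1) := by
  rintro _ ⟨k, rfl⟩ _ ⟨l, rfl⟩ hkl
  rw [hf, hf]
  exact lt_of_not_ge fun h => hq (fun e => hkl.ne (congrArg (fun k => (q k).1) e)) ⟨hkl.le, h⟩

lemma MemIdealI.preimage_swap {A : Set (Omega1 × Omega1)} (hA : MemIdealI A) :
    MemIdealI (Prod.swap ⁻¹' A) := by
  refine Set.Countable.mono ?_ hA
  intro α hα ⟨hV, hH⟩
  exact hα ⟨hH, hV⟩

lemma not_countable_vert_or_hor_of_not_memIdealI {B : Set (Omega1 × Omega1)}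
    (hB : ¬ MemIdealI B) :
    ¬ {α | ¬ (vertSection B α).Countable}.Countable ∨
      ¬ {β | ¬ (horSection B β).Countable}.Countable := by
  by_contra! h
  exact hB ((h.1.union h.2).mono fun _ hα => not_and_or.mp hα)

section

variable {ι : Type*} [LinearOrder ι] [Finite ι] {A : Set (Omega1 × Omega1)}

lemma exists_pairwise_not_le_of_not_countable_vert (hA : MemIdealI A)
    {B : ι → Set (Omega1 × Omega1)}
    (hB : ∀ i, ¬ {α | ¬ (vertSection (B i) α).Countable}.Countable) :
    ∃ γ₁, ∀ γ₂, ∃ q : ι → Omega1 × Omega1, (Pairwise fun i j => ¬ q i ≤ q j) ∧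
      ∀ i, q i ∈ B i ∧ q i ∉ A ∧ (q i).1 ≤ γ₁ ∧ γ₂ < (q i).2 := by
  obtain ⟨a, ha, has⟩ := exists_strictMono_forall_mem
    (fun i => {α | ¬ (vertSection (B i) α).Countable} \
      {α | ¬ ((vertSection A α).Countable ∧ (horSection A α).Countable)})
    (fun i => Omega1.not_bddAbove_of_not_countable fun h => hB i (h.of_sdiff hA)) (Classical.arbitrary _)
  have hA_sec : ∀ i, (vertSection A (a i)).Countable := fun i => (not_not.mp (has i).1.2).1
  obtain ⟨γ₁, hγ₁⟩ := (finite_range a).bddAbove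
  refine ⟨γ₁, fun γ₂ => ?_⟩
  obtain ⟨d, hd, hds⟩ := exists_strictMono_forall_mem (ι := ιᵒᵈ)
    (fun i => vertSection (B i.ofDual) (a i.ofDual) \ vertSection A (a i.ofDual))
    (fun i => Omega1.not_bddAbove_of_not_countable fun h => (has _).1.1 (h.of_sdiff (hA_sec _)))
    γ₂
  refine ⟨fun i => (a i, d (OrderDual.toDual i)),
    pairwise_not_le_of_strictMono_of_strictAnti ha fun i j h => hd h, fun i => ?_⟩
  exact ⟨(hds _).1.1, (hds _).1.2, hγ₁ (mem_range_self i), (hds _).2⟩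

lemma exists_pairwise_not_le_of_not_countable_hor (hA : MemIdealI A)
    {B : ι → Set (Omega1 × Omega1)}
    (hB : ∀ i, ¬ {β | ¬ (horSection (B i) β).Countable}.Countable) :
    ∃ γ₂, ∀ γ₁, ∃ q : ι → Omega1 × Omega1, (Pairwise fun i j => ¬ q i ≤ q j) ∧
      ∀ i, q i ∈ B i ∧ q i ∉ A ∧ (q i).2 ≤ γ₂ ∧ γ₁ < (q i).1 := by
  obtain ⟨γ₂, h⟩ := exists_pairwise_not_le_of_not_countable_vert hA.preimage_swap
    (B := fun i => Prod.swap ⁻¹' B i) hB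
  refine ⟨γ₂, fun γ₁ => ?_⟩
  obtain ⟨q, hq, hqB⟩ := h γ₁
  exact ⟨fun i => (q i).swap, fun i j hij => by simpa only [Prod.swap_le_swap] using hq hij, hqB⟩

lemma exists_pairwise_not_le_forall_mem (hA : MemIdealI A) {B : ι → Set (Omega1 × Omega1)}
    (hB : ∀ i, ¬ MemIdealI (B i)) :
    ∃ q : ι → Omega1 × Omega1, (Pairwise fun i j => ¬ q i ≤ q j) ∧ ∀ i, q i ∈ B i ∧ q i ∉ A := by
  let p : ι → Prop := fun i => ¬ {α | ¬ (vertSection (B i) α).Countable}.Countable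
  obtain ⟨γ₁, hV⟩ := exists_pairwise_not_le_of_not_countable_vert (ι := {i // p i}) hA
    (B := fun i => B i) fun i => i.2
  obtain ⟨γ₂, hH⟩ := exists_pairwise_not_le_of_not_countable_hor (ι := {i // ¬ p i}) hA
    (B := fun i => B i) fun i => (not_countable_vert_or_hor_of_not_memIdealI (hB i)).resolve_left i.2
  obtain ⟨qV, hqV, hV⟩ := hV γ₂
  obtain ⟨qH, hqH, hH⟩ := hH γ₁
  refine ⟨fun i => if h : p i then qV ⟨i, h⟩ else qH ⟨i, h⟩, fun i j hij => ?_, fun i => ?_⟩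
  · by_cases hi : p i <;> by_cases hj : p j <;> simp only [hi, hj, ↓reduceDIte]
    · exact hqV (by simpa using hij)
    · exact fun h => ((hV _).2.2.2.trans_le h.2).not_ge (hH _).2.2.1
    · exact fun h => ((hH _).2.2.2.trans_le h.1).not_ge (hV _).2.2.1
    · exact hqH (by simpa using hij)
  · by_cases hi : p i <;> simp only [hi, ↓reduceDIte]
    exacts [⟨(hV ⟨i, hi⟩).1, (hV ⟨i, hi⟩).2.1⟩, ⟨(hH ⟨i, hi⟩).1, (hH ⟨i, hi⟩).2.1⟩]

end

theorem exists_strictAnti_graph_omitting_meeting_general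
    (A : Set (Omega1 × Omega1)) (hA : MemIdealI A)
    (n : ℕ) (B : Fin n → Set (Omega1 × Omega1))
    (hB : ∀ i, ¬ MemIdealI (B i)) :
    ∃ (S : Set Omega1) (f : Omega1 → Omega1),
      S.Finite ∧ S.ncard = n ∧ StrictAntiOn f S ∧
      (∀ α ∈ S, (α, f α) ∉ A) ∧ (∀ i, ∃ α ∈ S, (α, f α) ∈ B i) := by
  obtain ⟨q, hq, hqB⟩ := exists_pairwise_not_le_forall_mem hA hB
  have hinj := injective_fst_of_pairwise_not_le hq
  set f := Function.extend (fun i => (q i).1) (fun i => (q i).2) id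
  have hf : ∀ i, f (q i).1 = (q i).2 := hinj.extend_apply _ _
  refine ⟨range fun i => (q i).1, f, finite_range _, ?_, strictAntiOn_of_pairwise_not_le hq hf,
    ?_, fun i => ⟨_, mem_range_self i, by rw [hf]; exact (hqB i).1⟩⟩
  · rw [ncard_range_of_injective hinj, Nat.card_fin]
  · rintro _ ⟨i, rfl⟩
    rw [hf]
    exact (hqB i).2

/-- For any `A` in the σ-ideal `𝓘` and sets `B₁, …, Bₙ` (`n ≥ 1`) not in `𝓘`, there is
a strictly decreasing function `f : S → ω₁`, `S ⊆ ω₁`, whose graph omits `A` and meets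
each `Bᵢ`; one may take `S` finite with exactly `n` elements. -/
theorem exists_strictAnti_graph_omitting_meeting
    (A : Set (Omega1 × Omega1)) (hA : MemIdealI A)
    (n : ℕ) (hn : 1 ≤ n) (B : Fin n → Set (Omega1 × Omega1))
    (hB : ∀ i, ¬ MemIdealI (B i)) :
    ∃ (S : Set Omega1) (f : Omega1 → Omega1),
      S.Finite ∧ S.ncard = n ∧ StrictAntiOn f S ∧
      (∀ α ∈ S, (α, f α) ∉ A) ∧ (∀ i, ∃ α ∈ S, (α, f α) ∈ B i) :=
  exists_strictAnti_graph_omitting_meeting_general A hA n B hB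

end
end

section
/- For every set B ⊆ ω₁ × ω₁ that does not belong to the σ-ideal 𝓘, the space 𝒳_B = {A ∈ 𝒳 : A ⊆ B} is not bisequential. -/
open Cardinal Filter Topology Set

noncomputable section
open Classical

/-- `F` is a finite graph of a strictly decreasing partial function: `F` is finite,
contains no two pairs with the same first coordinate, and whenever
`(α,β), (α',β') ∈ F` with `α < α'` then `β > β'`. -/
def IsDecGraph {T : Type*} [LinearOrder T] (F : Set (T × T)) : Prop :=
  F.Finite ∧ (∀ p ∈ F, ∀ q ∈ F, p.1 = q.1 → p = q) ∧
    (∀ p ∈ F, ∀ q ∈ F, p.1 < q.1 → q.2 < p.2)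

/-- The characteristic function of a set, with values in `{0,1} = Bool`. -/
def chi {T : Type*} (A : Set T) : T → Bool := fun x => if x ∈ A then true else false

/-- The space `𝒳` (over a linear order `T`) of characteristic functions of finite
graphs of strictly decreasing partial functions on `T`, viewed as a subset of the
product space `{0,1}^(T × T)`; it carries the subspace topology. -/
def XSpace (T : Type*) [LinearOrder T] : Set ((T × T) → Bool) :=
  {f | ∃ F : Set (T × T), IsDecGraph F ∧ f = chi F}

/-- The space `𝒳_B = {A ∈ 𝒳 : A ⊆ B}`, as a subset of `{0,1}^(ω₁ × ω₁)`. -/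
def XSpaceIn (B : Set (Omega1 × Omega1)) : Set ((Omega1 × Omega1) → Bool) :=
  {f | ∃ F : Set (Omega1 × Omega1), IsDecGraph F ∧ F ⊆ B ∧ f = chi F}

/-- The support of a point of `{0,1}^T`: the set of which it is the
characteristic function. -/
def supp {T : Type*} (f : T → Bool) : Set T := {x | f x = true}

/-- A topological space `X` is bisequential if for every ultrafilter `𝒰` on `X`
converging to a point `x` (every neighbourhood of `x` belongs to `𝒰`) there is a
decreasing sequence `U₀ ⊇ U₁ ⊇ ⋯` of members of `𝒰` converging to `x` (every
neighbourhood of `x` contains `Uₙ` for all sufficiently large `n`). -/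
def Bisequential (X : Type*) [TopologicalSpace X] : Prop :=
  ∀ (𝒰 : Ultrafilter X) (x : X), (𝒰 : Filter X) ≤ 𝓝 x →
    ∃ U : ℕ → Set X, (∀ n, U n ∈ 𝒰) ∧ (∀ n, U (n + 1) ⊆ U n) ∧
      ∀ V ∈ 𝓝 x, ∀ᶠ n in atTop, U n ⊆ V


/-!
Up to the homeomorphism `𝒳_B ≃ₜ 𝒳_{Bᵀ}` given by swapping coordinates, `B ∉ 𝓘` means that
uncountably many vertical sections of `B` are uncountable; then `D = {(α, β) ∈ B : α < β}` is
outside `𝓘` and has countable horizontal sections. Consequently each `W` with `W ∩ D ∉ 𝓘` has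
uncountably many uncountable vertical sections, so given finitely many such `W` and a finite set
`P` one builds a decreasing graph in `D \ P` meeting every `W`, each new point placed to the left
of and above the earlier ones. Hence the sets `{A : p ∉ A}` and `{A : A ∩ W ≠ ∅}` lie in one
ultrafilter, which converges to `∅`. If members `Uₙ` of it converged to `∅`, the sets `Wₙ` of
points missed by every member of `Uₙ` would cover `ω₁ × ω₁`, so `Wₙ ∩ D ∉ 𝓘` for some `n`, and
`Uₙ` could not meet `{A : A ∩ Wₙ ≠ ∅}`.
-/

theorem Ultrafilter.exists_forall_mem_of_iInter_nonempty {α ι : Type*} (s : ι → Set α)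
    (h : ∀ I : Finset ι, (⋂ i ∈ I, s i).Nonempty) : ∃ 𝒰 : Ultrafilter α, ∀ i, s i ∈ 𝒰 := by
  obtain ⟨𝒰, h𝒰⟩ := exists_ultrafilter_of_finite_inter_nonempty (range s) fun T hT => by
    rw [← image_univ, Finset.subset_set_image_iff] at hT
    obtain ⟨I, -, rfl⟩ := hT
    simpa using h I
  exact ⟨𝒰, fun i => h𝒰 (mem_range_self i)⟩

theorem Bisequential.of_homeomorph {X Y : Type*} [TopologicalSpace X] [TopologicalSpace Y]
    (h : Bisequential X) (e : X ≃ₜ Y) : Bisequential Y := by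
  intro 𝒰 y h𝒰
  obtain ⟨U, hU, hanti, hlim⟩ := h (𝒰.map e.symm) (e.symm y)
    ((map_mono h𝒰).trans (e.symm.map_nhds_eq y).le)
  refine ⟨fun n => e.symm ⁻¹' U n, hU, fun n => preimage_mono (hanti n), fun V hV => ?_⟩
  filter_upwards [hlim _ (e.symm.map_nhds_eq y ▸ image_mem_map hV)] with n hn
  exact (preimage_mono hn).trans (e.symm.preimage_image V).subset

namespace Omega1

theorem countable_Iio (γ : Omega1) : (Iio γ).Countable := by
  have h : (Iio γ.1).Countable := by
    rw [← le_aleph0_iff_set_countable, Cardinal.mk_Iio_ordinal, lift_le_aleph0,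
      ← lt_aleph_one_iff, ← lt_ord]
    exact γ.2
  exact h.preimage Subtype.val_injective

theorem countable_Iic_s1 (γ : Omega1) : (Iic γ).Countable := by
  rw [← Iio_insert]
  exact (countable_Iio γ).insert γ

theorem exists_mem_forall_lt {S T : Set Omega1} (hS : ¬ S.Countable) (hT : T.Countable) :
    ∃ x ∈ S, ∀ t ∈ T, t < x := by
  by_contra! h
  exact hS ((hT.biUnion fun t _ => countable_Iic_s1 t).mono fun x hx => by
    obtain ⟨t, ht, hxt⟩ := h x hx
    exact mem_biUnion ht hxt)

instance : Inhabited Omega1 := ⟨⟨0, by simpa using Ordinal.omega_pos 1⟩⟩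

end Omega1

theorem MemIdealI.mono {A A' : Set (Omega1 × Omega1)} (hA' : MemIdealI A') (h : A ⊆ A') :
    MemIdealI A := by
  refine Set.Countable.mono ?_ hA'
  exact fun _ hα hc => hα ⟨hc.1.mono fun _ hβ => h hβ, hc.2.mono fun _ hβ => h hβ⟩

theorem MemIdealI.iUnion {A : ℕ → Set (Omega1 × Omega1)} (h : ∀ n, MemIdealI (A n)) :
    MemIdealI (⋃ n, A n) := by
  refine (countable_iUnion h).mono fun α hα => mem_iUnion.2 ?_
  by_contra hc
  have hc n : _ ∧ _ := not_not.1 (not_exists.1 hc n)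
  refine hα ⟨(countable_iUnion fun n => (hc n).1).mono ?_,
    (countable_iUnion fun n => (hc n).2).mono ?_⟩ <;>
  · intro β hβ
    simpa [vertSection, horSection] using hβ

theorem not_countable_vertSection_of_not_memIdealI {A : Set (Omega1 × Omega1)}
    (hA : ¬ MemIdealI A) (hhor : ∀ β, (horSection A β).Countable) :
    ¬ {α | ¬ (vertSection A α).Countable}.Countable :=
  fun h => hA (h.mono fun α hα hv => hα ⟨hv, hhor α⟩)

section DecGraph

variable {T : Type*} [LinearOrder T]

theorem isDecGraph_empty : IsDecGraph (∅ : Set (T × T)) :=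
  ⟨finite_empty, by simp, by simp⟩

theorem IsDecGraph.insert {F : Set (T × T)} (hF : IsDecGraph F) {a b : T}
    (ha : ∀ p ∈ F, a < p.1) (hb : ∀ p ∈ F, p.2 < b) : IsDecGraph (insert (a, b) F) := by
  refine ⟨hF.1.insert _, ?_, ?_⟩
  · rintro p (rfl | hp) q (rfl | hq) h
    · rfl
    · exact absurd h (ha q hq).ne
    · exact absurd h (ha p hp).ne'
    · exact hF.2.1 p hp q hq h
  · rintro p (rfl | hp) q (rfl | hq) h
    · exact absurd h (lt_irrefl _)
    · exact hb q hq
    · exact absurd h (ha p hp).not_gt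
    · exact hF.2.2 p hp q hq h

theorem IsDecGraph.eq_of_snd_eq {F : Set (T × T)} (hF : IsDecGraph F) {p q : T × T}
    (hp : p ∈ F) (hq : q ∈ F) (h : p.2 = q.2) : p = q := by
  rcases lt_trichotomy p.1 q.1 with hlt | heq | hlt
  · exact absurd h (hF.2.2 p hp q hq hlt).ne'
  · exact hF.2.1 p hp q hq heq
  · exact absurd h (hF.2.2 q hq p hp hlt).ne

theorem IsDecGraph.preimage_swap {F : Set (T × T)} (hF : IsDecGraph F) :
    IsDecGraph (Prod.swap ⁻¹' F) := by
  refine ⟨hF.1.preimage Prod.swap_injective.injOn, fun p hp q hq h =>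
    Prod.swap_injective (hF.eq_of_snd_eq hp hq h), fun p hp q hq h => ?_⟩
  by_contra! hle
  rcases hle.lt_or_eq with hlt | heq
  · exact (hF.2.2 _ hp _ hq hlt).not_gt h
  · exact h.ne (congrArg Prod.snd (hF.2.1 _ hp _ hq heq))

end DecGraph

@[simp]
theorem chi_eq_true {T : Type*} {A : Set T} {x : T} : chi A x = true ↔ x ∈ A := by
  simp [chi]

@[simp]
theorem chi_eq_false {T : Type*} {A : Set T} {x : T} : chi A x = false ↔ x ∉ A := by
  simp [chi]

theorem exists_isDecGraph_subset_meets {D : Set (Omega1 × Omega1)}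
    (hD : ∀ β, (horSection D β).Countable) {P : Set (Omega1 × Omega1)} (hP : P.Finite)
    {𝒲 : Set (Set (Omega1 × Omega1))} (h𝒲 : 𝒲.Finite) (hpos : ∀ W ∈ 𝒲, ¬ MemIdealI (W ∩ D))
    (γ : Omega1) :
    ∃ F, IsDecGraph F ∧ F ⊆ D ∧ Disjoint F P ∧ (∀ W ∈ 𝒲, (F ∩ W).Nonempty) ∧
      ∀ p ∈ F, γ < p.1 := by
  induction 𝒲, h𝒲 using Set.Finite.induction_on generalizing γ with
  | empty => exact ⟨∅, isDecGraph_empty, empty_subset _, empty_disjoint _, by simp, by simp⟩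
  | @insert W 𝒲 _ _ ih =>
    have hWD := hpos W (mem_insert _ _)
    obtain ⟨α, hα, hγα⟩ := Omega1.exists_mem_forall_lt
      (not_countable_vertSection_of_not_memIdealI hWD fun β => (hD β).mono fun _ h => h.2)
      (countable_singleton γ)
    obtain ⟨F, hF, hFD, hFP, hFW, hFα⟩ := ih (fun W' hW' => hpos W' (mem_insert_of_mem _ hW')) α
    -- `β` above the second coordinates of `P` also keeps `(α, β)` out of `P`.
    obtain ⟨β, hβ, hβF⟩ := Omega1.exists_mem_forall_lt hα ((hF.1.union hP).image Prod.snd).countable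
    refine ⟨insert (α, β) F,
      hF.insert hFα fun p hp => hβF _ (mem_image_of_mem _ (Or.inl hp)),
      insert_subset hβ.2 hFD,
      disjoint_insert_left.2 ⟨fun h => (hβF _ (mem_image_of_mem _ (Or.inr h))).false, hFP⟩,
      ?_, ?_⟩
    · rintro W' (rfl | hW')
      · exact ⟨(α, β), mem_insert _ _, hβ.1⟩
      · exact (hFW W' hW').mono (inter_subset_inter_left _ (subset_insert _ _))
    · rintro p (rfl | hp)
      · exact hγα γ rfl
      · exact (hγα γ rfl).trans (hFα p hp)

namespace XSpaceIn

variable {B : Set (Omega1 × Omega1)}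

def empty (B : Set (Omega1 × Omega1)) : XSpaceIn B :=
  ⟨chi ∅, ∅, isDecGraph_empty, empty_subset B, rfl⟩

theorem le_nhds_empty_iff {l : Filter (XSpaceIn B)} :
    l ≤ 𝓝 (empty B) ↔ ∀ p, ∀ᶠ f in l, f.1 p = false := by
  rw [nhds_subtype, ← map_le_iff_le_comap, ← Tendsto, tendsto_pi_nhds]
  simp only [empty, chi, mem_empty_iff_false, if_false, nhds_discrete, tendsto_pure]

theorem exists_ultrafilter_le_nhds_empty {D : Set (Omega1 × Omega1)} (hDB : D ⊆ B)
    (hD : ∀ β, (horSection D β).Countable) :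
    ∃ 𝒰 : Ultrafilter (XSpaceIn B), ↑𝒰 ≤ 𝓝 (empty B) ∧
      ∀ W, ¬ MemIdealI (W ∩ D) → {f : XSpaceIn B | ∃ q ∈ W, f.1 q = true} ∈ 𝒰 := by
  let s : (Omega1 × Omega1) ⊕ {W // ¬ MemIdealI (W ∩ D)} → Set (XSpaceIn B) :=
    Sum.elim (fun p => {f | f.1 p = false}) (fun W => {f | ∃ q ∈ W.1, f.1 q = true})
  obtain ⟨𝒰, h𝒰⟩ := Ultrafilter.exists_forall_mem_of_iInter_nonempty s fun I => by
    obtain ⟨F, hF, hFD, hFP, hFW, -⟩ := exists_isDecGraph_subset_meets hD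
      (I.finite_toSet.preimage Sum.inl_injective.injOn)
      ((I.finite_toSet.preimage Sum.inr_injective.injOn).image Subtype.val)
      (by rintro _ ⟨W, -, rfl⟩; exact W.2) default
    refine ⟨⟨chi F, F, hF, hFD.trans hDB, rfl⟩, mem_iInter₂.2 ?_⟩
    rintro (p | ⟨W, hW⟩) hi
    · exact chi_eq_false.2 fun hp => disjoint_left.1 hFP hp hi
    · obtain ⟨q, hqF, hqW⟩ := hFW W ⟨⟨W, hW⟩, hi, rfl⟩
      exact ⟨q, hqW, chi_eq_true.2 hqF⟩
  exact ⟨𝒰, le_nhds_empty_iff.2 fun p => h𝒰 (.inl p), fun W hW => h𝒰 (.inr ⟨W, hW⟩)⟩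

theorem iUnion_setOf_forall_eq_false {U : ℕ → Set (XSpaceIn B)}
    (hU : ∀ V ∈ 𝓝 (empty B), ∀ᶠ n in atTop, U n ⊆ V) :
    ⋃ n, {q | ∀ f ∈ U n, f.1 q = false} = Set.univ :=
  eq_univ_of_forall fun q =>
    let ⟨n, hn⟩ := (hU _ (le_nhds_empty_iff.1 le_rfl q)).exists
    mem_iUnion.2 ⟨n, fun _ hf => hn hf⟩

theorem not_bisequential_of_subset {D : Set (Omega1 × Omega1)} (hDB : D ⊆ B)
    (hD : ¬ MemIdealI D) (hhor : ∀ β, (horSection D β).Countable) :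
    ¬ Bisequential (XSpaceIn B) := by
  intro hbis
  obtain ⟨𝒰, h𝒰, h𝒰W⟩ := exists_ultrafilter_le_nhds_empty hDB hhor
  obtain ⟨U, hU, -, hUlim⟩ := hbis 𝒰 _ h𝒰
  set W : ℕ → Set (Omega1 × Omega1) := fun n => {q | ∀ f ∈ U n, f.1 q = false}
  obtain ⟨n, hn⟩ : ∃ n, ¬ MemIdealI (W n ∩ D) := by
    by_contra! h
    refine hD ((MemIdealI.iUnion h).mono fun q hq => ?_)
    rw [← iUnion_inter, iUnion_setOf_forall_eq_false hUlim]
    exact ⟨mem_univ q, hq⟩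
  obtain ⟨f, ⟨q, hqW, hfq⟩, hfU⟩ := 𝒰.nonempty_of_mem (inter_mem (h𝒰W _ hn) (hU n))
  simp [hqW f hfU] at hfq

theorem not_bisequential_of_vertSection
    (hB : ¬ {α | ¬ (vertSection B α).Countable}.Countable) : ¬ Bisequential (XSpaceIn B) := by
  refine not_bisequential_of_subset (D := B ∩ {p | p.1 < p.2}) inter_subset_left
    (fun hD => hB (Set.Countable.mono ?_ hD)) fun β => (Omega1.countable_Iio β).mono
      fun _ h => h.2
  intro α hα hc
  refine hα <| (hc.1.union (Omega1.countable_Iic_s1 α)).mono fun β hβ => ?_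
  rcases lt_or_ge α β with h | h
  · exact .inl ⟨hβ, h⟩
  · exact .inr h

theorem comp_swap_mem {f : Omega1 × Omega1 → Bool} (hf : f ∈ XSpaceIn B) :
    f ∘ Prod.swap ∈ XSpaceIn (Prod.swap ⁻¹' B) := by
  obtain ⟨F, hF, hFB, rfl⟩ := hf
  exact ⟨Prod.swap ⁻¹' F, hF.preimage_swap, preimage_mono hFB, rfl⟩

def swapHomeomorph (B : Set (Omega1 × Omega1)) :
    XSpaceIn B ≃ₜ XSpaceIn (Prod.swap ⁻¹' B) :=
  (Homeomorph.piCongrLeft (Y := fun _ => Bool) (Equiv.prodComm Omega1 Omega1)).symm.sets <| by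
    ext f
    refine ⟨comp_swap_mem, fun hf => ?_⟩
    simpa [Function.comp_def, preimage_preimage] using comp_swap_mem hf

end XSpaceIn

/-- For any `B ⊆ ω₁ × ω₁` not in the σ-ideal `𝓘`, the space `𝒳_B` is not bisequential. -/
theorem XSpaceIn_not_bisequential (B : Set (Omega1 × Omega1)) (hB : ¬ MemIdealI B) :
    ¬ Bisequential ↥(XSpaceIn B) := by
  have hvh : {α | ¬ ((vertSection B α).Countable ∧ (horSection B α).Countable)} ⊆
      {α | ¬ (vertSection B α).Countable} ∪ {α | ¬ (horSection B α).Countable} :=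
    fun _ hα => not_and_or.1 hα
  by_cases hvert : {α | ¬ (vertSection B α).Countable}.Countable
  · have hhor : ¬ {α | ¬ (horSection B α).Countable}.Countable :=
      fun hhor => hB ((hvert.union hhor).mono hvh)
    exact fun h => XSpaceIn.not_bisequential_of_vertSection (B := Prod.swap ⁻¹' B) hhor
      (h.of_homeomorph (XSpaceIn.swapHomeomorph B))
  · exact XSpaceIn.not_bisequential_of_vertSection hvert

end
end

section
/- For every set B ⊆ ω₁ × ω₁, the space 𝒳_B is an Eberlein compactum: it is compact and there exist a Banach space E and a topological embedding of 𝒳_B into E equipped with its weak topology. In particular 𝒳 itself (the case B = ω₁ × ω₁) is an Eberlein compactum. -/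
/-!
Over a well-order the two pairwise conditions of a decreasing graph already force finiteness:
such a set is an antichain of the well quasi-order `ω₁ × ω₁`. Hence `𝒳_B` is cut out of the
Cantor cube `{0,1}^(ω₁ × ω₁)` by conditions on pairs of coordinates, so it is closed and compact.

Send a point to its characteristic vector in `ℓ^∞(ω₁ × ω₁)`. A functional `ℓ` on `ℓ^∞` has
absolutely summable coefficients `ℓ(eᵢ)`, and on a finitely supported point it is the sum of these
over the support, a uniformly convergent series of continuous functions of the point. So the map
is continuous into the weak topology, and as a continuous injection of a compact space into a
Hausdorff space it is an embedding.
-/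

open Cardinal Filter Topology Set

noncomputable section
open Classical

open scoped ENNReal

section DecreasingGraph

variable {T : Type*} [LinearOrder T]

theorem isDecGraph_iff_pairwise [WellFoundedLT T] {F : Set (T × T)} :
    IsDecGraph F ↔ (∀ p ∈ F, ∀ q ∈ F, p.1 = q.1 → p = q) ∧
      (∀ p ∈ F, ∀ q ∈ F, p.1 < q.1 → q.2 < p.2) := by
  refine ⟨fun h => h.2, fun ⟨hfun, hdec⟩ => ⟨?_, hfun, hdec⟩⟩
  refine WellQuasiOrderedLE.finite_of_isAntichain fun p hp q hq hne hle => hne ?_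
  rcases hle.1.lt_or_eq with hlt | heq
  · exact absurd hle.2 (hdec p hp q hq hlt).not_ge
  · exact hfun p hp q hq heq

end DecreasingGraph

section Support

variable {T : Type*}

theorem chi_apply_eq_true {A : Set T} {x : T} : chi A x = true ↔ x ∈ A := by
  simp [chi]

theorem supp_chi (A : Set T) : supp (chi A) = A :=
  Set.ext fun _ => chi_apply_eq_true

theorem chi_supp (f : T → Bool) : chi (supp f) = f := by
  funext x
  by_cases hx : f x = true <;> simp_all [supp, chi]

theorem isClosed_setOf_forall_imp_of_eq_true (R : T → T → Prop) :
    IsClosed {f : T → Bool | ∀ p q, f p = true → f q = true → R p q} := by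
  simp only [Set.ofPred_forall]
  refine isClosed_iInter fun p => isClosed_iInter fun q => ?_
  change IsClosed ((fun f : T → Bool => (f p, f q)) ⁻¹'
    {z : Bool × Bool | z.1 = true → z.2 = true → R p q})
  exact (isClosed_discrete _).preimage ((continuous_apply p).prodMk (continuous_apply q))

end Support

theorem XSpaceIn_eq_setOf (B : Set (Omega1 × Omega1)) :
    XSpaceIn B = {f | ∀ p q, f p = true → f q = true →
      p ∈ B ∧ (p.1 = q.1 → p = q) ∧ (p.1 < q.1 → q.2 < p.2)} := by
  ext f
  constructor
  · rintro ⟨F, ⟨-, hfun, hdec⟩, hFB, rfl⟩ p q hp hq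
    rw [chi_apply_eq_true] at hp hq
    exact ⟨hFB hp, hfun p hp q hq, hdec p hp q hq⟩
  · intro hf
    refine ⟨supp f, isDecGraph_iff_pairwise.2 ⟨?_, ?_⟩, fun p hp => (hf p p hp hp).1, (chi_supp f).symm⟩
    · exact fun p hp q hq => (hf p q hp hq).2.1
    · exact fun p hp q hq => (hf p q hp hq).2.2

theorem isCompact_XSpaceIn (B : Set (Omega1 × Omega1)) : IsCompact (XSpaceIn B) := by
  rw [XSpaceIn_eq_setOf]
  exact (isClosed_setOf_forall_imp_of_eq_true _).isCompact

theorem finite_supp_of_mem_XSpaceIn {B : Set (Omega1 × Omega1)} {f : (Omega1 × Omega1) → Bool}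
    (hf : f ∈ XSpaceIn B) : (supp f).Finite := by
  obtain ⟨F, hF, -, rfl⟩ := hf
  rw [supp_chi]
  exact hF.1

section IndicatorLp

variable {Γ : Type*}

theorem lp.eq_sum_single_of_forall_notMem {E : Γ → Type*} [∀ i, NormedAddCommGroup (E i)]
    {p : ℝ≥0∞} (f : lp E p) (s : Finset Γ) (hf : ∀ i ∉ s, f i = 0) :
    f = ∑ i ∈ s, lp.single p i (f i) := by
  ext j
  rw [lp.coeFn_sum, Finset.sum_apply]
  simp only [lp.coeFn_single, Finset.sum_pi_single]
  split_ifs with hj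
  · rfl
  · exact hf j hj

def indicatorLp (x : Γ → Bool) : lp (fun _ : Γ => ℝ) ∞ :=
  ⟨fun i => if x i then 1 else 0, memℓp_infty ⟨1, by
    rintro _ ⟨i, rfl⟩
    change ‖(if x i then 1 else 0 : ℝ)‖ ≤ 1
    split_ifs <;> simp⟩⟩

theorem indicatorLp_apply (x : Γ → Bool) (i : Γ) :
    indicatorLp x i = if x i then 1 else 0 := rfl

theorem indicatorLp_injective : Function.Injective (indicatorLp (Γ := Γ)) := by
  intro x y h
  funext i
  have := congrArg (fun f : lp (fun _ : Γ => ℝ) ∞ => f i) h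
  simp only [indicatorLp_apply] at this
  revert this
  cases x i <;> cases y i <;> simp

theorem summable_abs_apply_single (ℓ : StrongDual ℝ (lp (fun _ : Γ => ℝ) ∞)) :
    Summable fun i => |ℓ (lp.single ∞ i 1)| := by
  refine summable_of_sum_le (fun _ => abs_nonneg _) (c := ‖ℓ‖) fun s => ?_
  set y := fun i => ℓ (lp.single ∞ i 1)
  set u : lp (fun _ : Γ => ℝ) ∞ := ∑ i ∈ s, lp.single ∞ i (SignType.sign (y i) : ℝ)
  have hu : ‖u‖ ≤ 1 := by
    refine lp.norm_le_of_forall_le zero_le_one fun j => ?_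
    simp only [u, lp.coeFn_sum, Finset.sum_apply, lp.coeFn_single, Finset.sum_pi_single]
    split_ifs
    · rcases SignType.trichotomy (SignType.sign (y j)) with h | h | h <;> simp [h]
    · simp
  calc ∑ i ∈ s, |y i| = ℓ u := by
        simp only [u, map_sum]
        refine Finset.sum_congr rfl fun i _ => ?_
        rw [← mul_one (SignType.sign (y i) : ℝ), ← smul_eq_mul, lp.single_smul, map_smul,
          smul_eq_mul, sign_mul_self]
    _ ≤ ‖ℓ‖ * ‖u‖ := (le_abs_self _).trans (ℓ.le_opNorm u)
    _ ≤ ‖ℓ‖ := mul_le_of_le_one_right (norm_nonneg ℓ) hu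

theorem apply_indicatorLp_eq_tsum (ℓ : StrongDual ℝ (lp (fun _ : Γ => ℝ) ∞)) {x : Γ → Bool}
    (hx : (supp x).Finite) :
    ℓ (indicatorLp x) = ∑' i, if x i then ℓ (lp.single ∞ i 1) else 0 := by
  have hsupp : ∀ i ∉ hx.toFinset, x i = false := by simp [supp]
  rw [tsum_eq_sum (s := hx.toFinset) fun i hi => by simp [hsupp i hi],
    lp.eq_sum_single_of_forall_notMem (indicatorLp x) hx.toFinset
      fun i hi => by simp [indicatorLp_apply, hsupp i hi], map_sum]
  refine Finset.sum_congr rfl fun i hi => ?_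
  have hxi : x i = true := by simpa [supp] using hi
  simp [indicatorLp_apply, hxi]

theorem continuous_toWeakSpace_indicatorLp {S : Set (Γ → Bool)}
    (hS : ∀ x ∈ S, (supp x).Finite) :
    Continuous fun x : S => toWeakSpace ℝ _ (indicatorLp (x : Γ → Bool)) := by
  refine WeakBilin.continuous_of_continuous_eval _ fun ℓ => ?_
  have hsum : Continuous fun x : Γ → Bool => ∑' i, if x i then ℓ (lp.single ∞ i 1) else 0 := by
    refine continuous_tsum (fun i => ?_) (summable_abs_apply_single ℓ) fun i x => ?_
    · exact (continuous_of_discreteTopology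
        (f := fun b : Bool => if b then ℓ (lp.single ∞ i 1) else 0)).comp (continuous_apply i)
    · split_ifs <;> simp
  exact (hsum.comp continuous_subtype_val).congr fun x =>
    (apply_indicatorLp_eq_tsum ℓ (hS x x.2)).symm

theorem isEmbedding_toWeakSpace_indicatorLp {S : Set (Γ → Bool)} (hcpt : IsCompact S)
    (hS : ∀ x ∈ S, (supp x).Finite) :
    IsEmbedding fun x : S => toWeakSpace ℝ _ (indicatorLp (x : Γ → Bool)) := by
  have := isCompact_iff_compactSpace.mp hcpt
  refine ((continuous_toWeakSpace_indicatorLp hS).isClosedEmbedding ?_).isEmbedding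
  exact fun x y h => Subtype.ext (indicatorLp_injective ((toWeakSpace ℝ _).injective h))

end IndicatorLp

/-- For every `B ⊆ ω₁ × ω₁`, the space `𝒳_B` is an Eberlein compactum: it is compact
and embeds topologically into some Banach space `E` equipped with its weak topology.
The case `B = univ` gives that `𝒳` itself is an Eberlein compactum. -/
theorem XSpaceIn_isEberlein (B : Set (Omega1 × Omega1)) :
    IsCompact (XSpaceIn B) ∧
    ∃ (E : Type 1) (instE : NormedAddCommGroup E),
      letI := instE
      ∃ (instN : NormedSpace ℝ E),
        letI := instN
        ∃ (_ : CompleteSpace E) (φ : ↥(XSpaceIn B) → WeakSpace ℝ E),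
          IsEmbedding φ :=
  ⟨isCompact_XSpaceIn B, lp (fun _ : Omega1 × Omega1 => ℝ) ∞, inferInstance, inferInstance,
    inferInstance, _, isEmbedding_toWeakSpace_indicatorLp (isCompact_XSpaceIn B)
      fun _ => finite_supp_of_mem_XSpaceIn⟩

end
end

section
/- Every uniform Eberlein compactum K is a continuous image of a closed subspace of α(λ)^ω for some cardinal λ, where α(λ) denotes the one-point compactification of a discrete space of cardinality λ; moreover one can take λ to be the weight of K. -/
open Cardinal Filter Topology Set

noncomputable section
open Classical

universe u v

/-- The weight of a topological space: the least cardinality of a base for the topology. -/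
def tweight (X : Type u) [TopologicalSpace X] : Cardinal.{u} :=
  sInf {c | ∃ B : Set (Set X), TopologicalSpace.IsTopologicalBasis B ∧ #B = c}

/-- A canonical discrete space of cardinality `κ`. -/
instance (κ : Cardinal.{u}) : TopologicalSpace κ.out := ⊥

instance (κ : Cardinal.{u}) : DiscreteTopology κ.out := ⟨rfl⟩

/-!
The coordinates `k ↦ ⟪s, e k⟫` along a maximal orthonormal family are weakly continuous and
separate the points of `K`. The weakly compact set `e '' K` is norm bounded (Banach–Steinhaus),
say by `C`, so by Bessel's inequality at most `C² / ε²` coordinates exceed `ε` at any point: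
the family is uniformly sparse. Keeping one coordinate for each pair of basic open sets that
some coordinate separates leaves weight-many coordinates (a finite `K` is discrete and is
handled by indicator functions).

A uniformly sparse family indexed by `Γ` is coded by points of `α(Γ)^ω`: at level `q`,
boundedly many slots list the coordinates exceeding `1 / (q + 1)`, and further cells carry the
binary digits of the sigmoid (an injection of `ℝ` into `[0, 1]`) of each listed coordinate,
a digit `1` being written as the name of the coordinate and a digit `0` as `∞`. Since the names
are isolated points of `α(Γ)`, the relation "`c` codes `k`" is closed; it is the graph of a
function, and compactness of `K` makes this decoding function continuous.
-/

open Function TopologicalSpace Encodable Real OnePoint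

theorem Set.encard_le_coe_of_forall_finset_card_le {α : Type*} {s : Set α} {n : ℕ}
    (h : ∀ u : Finset α, ↑u ⊆ s → u.card ≤ n) : s.encard ≤ n := by
  by_contra! hlt
  obtain ⟨t, hts, ht⟩ := exists_subset_encard_eq (Order.add_one_le_of_lt hlt)
  have htfin : t.Finite := finite_of_encard_eq_coe (k := n + 1) (by simpa using ht)
  have hcard := h htfin.toFinset (by simpa using hts)
  rw [htfin.encard_eq_coe_toFinset_card] at ht
  norm_cast at ht
  omega

theorem Orthonormal.encard_setOf_lt_norm_inner_le {𝕜 E ι : Type*} [RCLike 𝕜]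
    [NormedAddCommGroup E] [InnerProductSpace 𝕜 E] {v : ι → E} (hv : Orthonormal 𝕜 v) (z : E)
    {ε : ℝ} (hε : 0 < ε) {n : ℕ} (hn : ‖z‖ ^ 2 ≤ n * ε ^ 2) :
    {i | ε < ‖inner 𝕜 (v i) z‖}.encard ≤ n := by
  refine Set.encard_le_coe_of_forall_finset_card_le fun u hu => ?_
  have hbessel : u.card * ε ^ 2 ≤ n * ε ^ 2 := calc
    u.card * ε ^ 2 = ∑ i ∈ u, ε ^ 2 := by simp
    _ ≤ ∑ i ∈ u, ‖inner 𝕜 (v i) z‖ ^ 2 :=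
      Finset.sum_le_sum fun i hi => pow_le_pow_left₀ hε.le (hu hi).le 2
    _ ≤ ‖z‖ ^ 2 := hv.sum_inner_products_le z
    _ ≤ n * ε ^ 2 := hn
  exact_mod_cast le_of_mul_le_mul_right hbessel (by positivity)

section WeakSpace

variable {𝕜 E : Type*} [RCLike 𝕜] [NormedAddCommGroup E] [NormedSpace 𝕜 E]

theorem WeakSpace.continuous_strongDual_apply (f : StrongDual 𝕜 E) :
    Continuous fun x : WeakSpace 𝕜 E => f ((toWeakSpace 𝕜 E).symm x) :=
  WeakBilin.eval_continuous _ f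

theorem IsCompact.exists_norm_le_weakSpace {S : Set (WeakSpace 𝕜 E)} (hS : IsCompact S) :
    ∃ C, ∀ x ∈ S, ‖(toWeakSpace 𝕜 E).symm x‖ ≤ C := by
  obtain ⟨C, hC⟩ := banach_steinhaus
    (g := fun x : S => NormedSpace.inclusionInDoubleDual 𝕜 E ((toWeakSpace 𝕜 E).symm x))
    fun f => by
      obtain ⟨C, hC⟩ := (hS.image (WeakSpace.continuous_strongDual_apply f).norm).bddAbove
      exact ⟨C, fun x => hC ⟨x, x.2, rfl⟩⟩
  refine ⟨C, fun x hx => ?_⟩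
  rw [← (NormedSpace.inclusionInDoubleDualLi 𝕜).norm_map]
  exact hC ⟨x, hx⟩

end WeakSpace

section UniformlySparse

variable {K ι Γ : Type*}

def IsUniformlySparse (φ : K → ι → ℝ) : Prop :=
  ∀ ε > 0, ∃ n : ℕ, ∀ k, {i | ε < |φ k i|}.encard ≤ n

theorem IsUniformlySparse.comp_injective {ι' : Type*} {φ : K → ι → ℝ}
    (hφ : IsUniformlySparse φ) {g : ι' → ι} (hg : Injective g) :
    IsUniformlySparse fun k i' => φ k (g i') := by
  intro ε hε
  obtain ⟨n, hn⟩ := hφ ε hε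
  exact ⟨n, fun k => (hg.encard_image _).symm.trans_le
    ((encard_le_encard (image_preimage_subset _ _)).trans (hn k))⟩

theorem IsUniformlySparse.extend {φ : K → ι → ℝ} (hφ : IsUniformlySparse φ) {j : ι → Γ}
    (hj : Injective j) : IsUniformlySparse fun k => extend j (φ k) 0 := by
  intro ε hε
  obtain ⟨n, hn⟩ := hφ ε hε
  refine ⟨n, fun k => (encard_le_encard fun γ hγ => ?_).trans
    ((hj.encard_image _).trans_le (hn k))⟩
  by_cases h : ∃ i, j i = γ
  · obtain ⟨i, rfl⟩ := h
    exact ⟨i, by simpa [hj.extend_apply] using hγ, rfl⟩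
  · simp [extend_apply' _ _ _ h, hε.not_gt] at hγ

theorem Continuous.extend_zero [TopologicalSpace K] {φ : K → ι → ℝ} (hφ : Continuous φ)
    {j : ι → Γ} (hj : Injective j) : Continuous fun k => extend j (φ k) 0 := by
  refine continuous_pi fun γ => ?_
  by_cases h : ∃ i, j i = γ
  · obtain ⟨i, rfl⟩ := h
    simp only [hj.extend_apply]
    exact (continuous_apply i).comp hφ
  · simpa [extend_apply' _ _ _ h] using continuous_const

theorem isUniformlySparse_piSingle [DecidableEq K] :
    IsUniformlySparse fun k : K => Pi.single k (1 : ℝ) := by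
  refine fun ε hε => ⟨1, fun k => ?_⟩
  calc {i | ε < |Pi.single (M := fun _ => ℝ) k 1 i|}.encard ≤ ({k} : Set K).encard :=
        encard_le_encard fun i hi => by
          by_contra h
          simp [Pi.single_apply, show i ≠ k from h, hε.not_gt] at hi
    _ = 1 := encard_singleton k

theorem exists_isUniformlySparse_of_weakSpace {H : Type*} [NormedAddCommGroup H]
    [InnerProductSpace ℝ H] [TopologicalSpace K] [CompactSpace K] {e : K → WeakSpace ℝ H}
    (hcont : Continuous e) (hinj : Injective e) :
    ∃ (w : Set H) (φ : K → w → ℝ), Continuous φ ∧ Injective φ ∧ IsUniformlySparse φ := by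
  obtain ⟨w, -, hw, hmax⟩ := exists_maximal_orthonormal (orthonormal_empty ℝ H)
  obtain ⟨C, hC⟩ := (isCompact_range hcont).exists_norm_le_weakSpace
  set ē := fun k => (toWeakSpace ℝ H).symm (e k)
  refine ⟨w, fun k s => inner ℝ (s : H) (ē k), ?_, fun k k' h => ?_, fun ε hε => ?_⟩
  · exact continuous_pi fun s =>
      (WeakSpace.continuous_strongDual_apply (innerSL ℝ (s : H))).comp hcont
  · have hortho : Submodule.span ℝ w ⟂ Submodule.span ℝ {ē k - ē k'} :=
      Submodule.isOrtho_span.2 fun u hu z hz => by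
        rw [hz, inner_sub_right, sub_eq_zero]
        exact congrFun h ⟨u, hu⟩
    have hzero := hortho.ge (Submodule.mem_span_singleton_self _)
    rw [(maximal_orthonormal_iff_orthogonalComplement_eq_bot hw).1 hmax, Submodule.mem_bot,
      sub_eq_zero] at hzero
    exact hinj ((toWeakSpace ℝ H).symm.injective hzero)
  · refine ⟨⌈C ^ 2 / ε ^ 2⌉₊, fun k => ?_⟩
    have hnorm : ‖ē k‖ ^ 2 ≤ ⌈C ^ 2 / ε ^ 2⌉₊ * ε ^ 2 := calc
      ‖ē k‖ ^ 2 ≤ C ^ 2 := pow_le_pow_left₀ (norm_nonneg _) (hC _ ⟨k, rfl⟩) 2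
      _ = C ^ 2 / ε ^ 2 * ε ^ 2 := by field_simp
      _ ≤ ⌈C ^ 2 / ε ^ 2⌉₊ * ε ^ 2 := by gcongr; exact Nat.le_ceil _
    simpa only [Real.norm_eq_abs] using hw.encard_setOf_lt_norm_inner_le (ē k) hε hnorm

theorem exists_injective_restrict_of_isTopologicalBasis {Y : Type*} [TopologicalSpace K]
    [TopologicalSpace Y] [T2Space Y] {B : Set (Set K)} (hB : IsTopologicalBasis B)
    {φ : K → ι → Y} (hφ : Continuous φ) (hinj : Injective φ) :
    ∃ S : Set ι, (∃ g : S → B × B, Injective g) ∧ Injective fun k (s : S) => φ k s := by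
  let separates (p : B × B) : Prop :=
    ∃ i, ∀ a ∈ (p.1 : Set K), ∀ a' ∈ (p.2 : Set K), φ a i ≠ φ a' i
  let σ : {p // separates p} → ι := fun p => p.2.choose
  refine ⟨range σ, ⟨Subtype.val ∘ rangeSplitting σ,
    Subtype.val_injective.comp (rangeSplitting_injective σ)⟩, fun k k' h => ?_⟩
  by_contra hne
  obtain ⟨i, hi⟩ : ∃ i, φ k i ≠ φ k' i := by
    contrapose! hne
    exact hinj (funext hne)
  obtain ⟨O, O', hO, hO', hkO, hkO', hOO'⟩ := t2_separation hi
  obtain ⟨U, hU, hkU, hUO⟩ :=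
    hB.exists_subset_of_mem_open hkO (hO.preimage ((continuous_apply i).comp hφ))
  obtain ⟨V, hV, hkV, hVO⟩ :=
    hB.exists_subset_of_mem_open hkO' (hO'.preimage ((continuous_apply i).comp hφ))
  let p : {p // separates p} :=
    ⟨(⟨U, hU⟩, ⟨V, hV⟩), i, fun a ha a' ha' => hOO'.ne_of_mem (hUO ha) (hVO ha')⟩
  exact p.2.choose_spec k hkU k' hkV (congrFun h ⟨σ p, mem_range_self p⟩)

end UniformlySparse

section Weight

variable (X : Type u) [TopologicalSpace X]

theorem exists_isTopologicalBasis_mk_eq_tweight :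
    ∃ B : Set (Set X), IsTopologicalBasis B ∧ #B = tweight X :=
  csInf_mem (s := {c | ∃ B : Set (Set X), IsTopologicalBasis B ∧ #B = c})
    ⟨_, _, isTopologicalBasis_opens, rfl⟩

theorem mk_le_tweight [DiscreteTopology X] : #X ≤ tweight X := by
  refine le_csInf ⟨_, _, isTopologicalBasis_opens, rfl⟩ ?_
  rintro _ ⟨B, hB, rfl⟩
  have hsingleton (x : X) : {x} ∈ B := by
    obtain ⟨V, hV, hxV, hVx⟩ :=
      hB.exists_subset_of_mem_open (mem_singleton x) (isOpen_discrete _)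
    rwa [← hVx.antisymm (singleton_subset_iff.2 hxV)]
  exact mk_le_of_injective (f := fun x => (⟨{x}, hsingleton x⟩ : B))
    fun x y h => singleton_injective (congrArg Subtype.val h)

theorem aleph0_le_tweight [T1Space X] [Infinite X] : ℵ₀ ≤ tweight X := by
  obtain ⟨B, hB, hBcard⟩ := exists_isTopologicalBasis_mk_eq_tweight X
  rw [← hBcard]
  by_contra! hfin
  have : Finite B := (lt_aleph0_iff_set_finite.1 hfin).to_subtype
  have : Finite X := Finite.of_injective (fun x => {U : B | x ∈ (U : Set X)}) fun x y h => by
    by_contra hne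
    obtain ⟨U, hU, hxU, hUy⟩ :=
      hB.exists_subset_of_mem_open (mem_compl_singleton_iff.2 hne) isOpen_compl_singleton
    exact hUy ((Set.ext_iff.1 h ⟨U, hU⟩).1 hxU) rfl
  exact not_finite X

end Weight

theorem exists_isClosed_continuous_surjective_of_isClosed_rel {X Y : Type*}
    [TopologicalSpace X] [TopologicalSpace Y] [CompactSpace Y] {R : Set (X × Y)}
    (hR : IsClosed R) (hfun : ∀ x y y', (x, y) ∈ R → (x, y') ∈ R → y = y')
    (htot : ∀ y, ∃ x, (x, y) ∈ R) :
    ∃ F : Set X, IsClosed F ∧ ∃ f : F → Y, Continuous f ∧ Surjective f := by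
  have hF (x : Prod.fst '' R) : ∃ y, (x.1, y) ∈ R := by
    obtain ⟨_, ⟨⟨x, y⟩, h, rfl⟩⟩ := x
    exact ⟨y, h⟩
  choose f hf using hF
  refine ⟨Prod.fst '' R, isClosedMap_fst_of_compactSpace _ hR, f,
    continuous_iff_isClosed.2 fun C hC => ?_, fun y => ?_⟩
  · have hpre : f ⁻¹' C = Subtype.val ⁻¹' (Prod.fst '' (R ∩ Prod.snd ⁻¹' C)) := by
      ext x
      refine ⟨fun hx => ⟨(x.1, f x), ⟨hf x, hx⟩, rfl⟩, ?_⟩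
      rintro ⟨⟨_, y⟩, ⟨h, hy⟩, rfl⟩
      rwa [mem_preimage, hfun _ _ _ (hf x) h]
    rw [hpre]
    exact (isClosedMap_fst_of_compactSpace _ (hR.inter (hC.preimage continuous_snd))).preimage
      continuous_subtype_val
  · obtain ⟨x, hx⟩ := htot y
    exact ⟨⟨x, (x, y), hx, rfl⟩, hfun _ _ _ (hf _) hx⟩

theorem OnePoint.isClopen_singleton_coe {Γ : Type*} [TopologicalSpace Γ] [DiscreteTopology Γ]
    (γ : Γ) : IsClopen {(γ : OnePoint Γ)} :=
  ⟨isClosed_singleton, image_singleton (f := ((↑) : Γ → OnePoint Γ)) ▸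
    isOpen_image_coe.2 (isOpen_discrete _)⟩

namespace SparseCode

variable {K Γ : Type*}

abbrev Cell : Type := (ℕ × ℕ) ⊕ (ℕ × ℕ × ℕ)

def slot (c : ℕ → OnePoint Γ) (q i : ℕ) : OnePoint Γ :=
  c (encode (Sum.inl (q, i) : Cell))

def slotDigits (c : ℕ → OnePoint Γ) (γ : Γ) (q i : ℕ) : ℕ → Fin 2 := fun m =>
  ({(γ : OnePoint Γ)} : Set (OnePoint Γ)).indicator 1 (c (encode (Sum.inr (q, i, m) : Cell)))

theorem exists_slot_slotDigits (o : ℕ → ℕ → Option Γ) (d : Γ → ℕ → Fin 2) :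
    ∃ c : ℕ → OnePoint Γ, ∀ q i (γ : Γ), (slot c q i = γ ↔ o q i = Option.some γ) ∧
      (o q i = Option.some γ → slotDigits c γ q i = d γ) := by
  let g : Cell → OnePoint Γ
    | .inl (q, i) => (o q i).elim ∞ (↑)
    | .inr (q, i, m) => (o q i).elim ∞ fun γ => if d γ m = 1 then ↑γ else ∞
  refine ⟨fun n => g (Denumerable.ofNat Cell n),
    fun q i γ => ⟨?_, fun h => funext fun m => ?_⟩⟩
  · simp only [slot, Denumerable.ofNat_encode, g]
    cases o q i <;> simp [infty_ne_coe]
  · simp only [slotDigits, Denumerable.ofNat_encode, g, h, Option.elim_some]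
    generalize d γ m = b
    fin_cases b <;> simp [infty_ne_coe]

def codeRel (φ : K → Γ → ℝ) (N : ℕ → ℕ) : Set ((ℕ → OnePoint Γ) × K) :=
  {p | (∀ (q : ℕ) γ, 1 / ((q : ℝ) + 1) < |φ p.2 γ| → ∃ i < N q, slot p.1 q i = γ) ∧
    ∀ q i (γ : Γ), slot p.1 q i = γ → sigmoid (φ p.2 γ) = ofDigits (slotDigits p.1 γ q i)}

theorem isClosed_codeRel [TopologicalSpace K] [TopologicalSpace Γ] [DiscreteTopology Γ]
    {φ : K → Γ → ℝ} (hφ : Continuous φ) (N : ℕ → ℕ) : IsClosed (codeRel φ N) := by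
  have hslot (q i : ℕ) (γ : Γ) : IsClopen {p : (ℕ → OnePoint Γ) × K | slot p.1 q i = γ} :=
    (isClopen_singleton_coe γ).preimage ((continuous_apply _).comp continuous_fst)
  have hdigits (γ : Γ) (q i : ℕ) : Continuous fun c : ℕ → OnePoint Γ => slotDigits c γ q i :=
    continuous_pi fun m => ((isClopen_singleton_coe γ).continuous_indicator
      continuous_const).comp (continuous_apply _)
  have hcoord (γ : Γ) : Continuous fun p : (ℕ → OnePoint Γ) × K => φ p.2 γ :=
    (continuous_apply γ).comp (hφ.comp continuous_snd)
  simp only [codeRel, ofPred_and, ofPred_forall]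
  refine .inter (isClosed_iInter fun q => isClosed_iInter fun γ => isClosed_imp
    (isOpen_lt continuous_const (hcoord γ).abs) ?_) (isClosed_iInter fun q => isClosed_iInter
    fun i => isClosed_iInter fun γ => isClosed_imp (hslot q i γ).isOpen (isClosed_eq
      (continuous_sigmoid.comp (hcoord γ))
      (continuous_ofDigits.comp ((hdigits γ q i).comp continuous_fst))))
  have hslots : {p : (ℕ → OnePoint Γ) × K | ∃ i < N q, slot p.1 q i = γ} =
      ⋃ i ∈ Iio (N q), {p | slot p.1 q i = γ} := by
    ext
    simp
  rw [hslots]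
  exact (finite_Iio _).isClosed_biUnion fun i _ => (hslot q i γ).isClosed

theorem eq_of_mem_codeRel {φ : K → Γ → ℝ} (hinj : Injective φ) {N : ℕ → ℕ}
    {c : ℕ → OnePoint Γ} {k k' : K} (h : (c, k) ∈ codeRel φ N) (h' : (c, k') ∈ codeRel φ N) :
    k = k' := by
  refine hinj (funext fun γ => ?_)
  by_cases hγ : ∃ q i, slot c q i = γ
  · obtain ⟨q, i, hqi⟩ := hγ
    exact sigmoid_injective ((h.2 q i γ hqi).trans (h'.2 q i γ hqi).symm)
  · simp only [not_exists] at hγ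
    have hzero {k : K} (hk : (c, k) ∈ codeRel φ N) : φ k γ = 0 := by
      by_contra hne
      obtain ⟨q, hq⟩ := exists_nat_one_div_lt (abs_pos.2 hne)
      obtain ⟨i, -, hi⟩ := hk.1 q γ hq
      exact hγ q i hi
    rw [hzero h, hzero h']

theorem exists_mem_codeRel {φ : K → Γ → ℝ} {N : ℕ → ℕ}
    (hN : ∀ (q : ℕ) k, {γ | 1 / ((q : ℝ) + 1) < |φ k γ|}.encard ≤ N q) (k : K) :
    ∃ c, (c, k) ∈ codeRel φ N := by
  have hfin (q : ℕ) : {γ | 1 / ((q : ℝ) + 1) < |φ k γ|}.Finite :=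
    finite_of_encard_le_coe (hN q k)
  let l (q : ℕ) : List Γ := (hfin q).toFinset.toList
  have hlen (q : ℕ) : (l q).length ≤ N q := by
    have := hN q k
    rwa [(hfin q).encard_eq_coe_toFinset_card, ENat.natCast_le_natCast,
      ← Finset.length_toList] at this
  choose d hd using fun γ => ofDigits_SurjOn (b := 2) one_lt_two
    ⟨sigmoid_nonneg (φ k γ), sigmoid_le_one (φ k γ)⟩
  obtain ⟨c, hc⟩ := exists_slot_slotDigits (fun q i => (l q)[i]?) d
  refine ⟨c, fun q γ hγ => ?_, fun q i γ hqi => ?_⟩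
  · obtain ⟨i, hi⟩ := List.mem_iff_getElem?.1 (Finset.mem_toList.2 ((hfin q).mem_toFinset.2 hγ))
    exact ⟨i, (List.getElem?_eq_some_iff.1 hi).1.trans_le (hlen q), (hc q i γ).1.2 hi⟩
  · rw [(hc q i γ).2 ((hc q i γ).1.1 hqi), (hd γ).2]

end SparseCode

section Coding

variable {K ι Γ : Type*} [TopologicalSpace K] [CompactSpace K] [TopologicalSpace Γ]
  [DiscreteTopology Γ]

theorem exists_isClosed_surjective_of_isUniformlySparse {φ : K → Γ → ℝ} (hφ : Continuous φ)
    (hinj : Injective φ) (hsparse : IsUniformlySparse φ) :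
    ∃ F : Set (ℕ → OnePoint Γ), IsClosed F ∧ ∃ f : F → K, Continuous f ∧ Surjective f := by
  choose N hN using fun q : ℕ => hsparse (1 / ((q : ℝ) + 1)) (by positivity)
  exact exists_isClosed_continuous_surjective_of_isClosed_rel (SparseCode.isClosed_codeRel hφ N)
    (fun _ _ _ => SparseCode.eq_of_mem_codeRel hinj)
    (SparseCode.exists_mem_codeRel fun q k => hN q k)

theorem exists_isClosed_surjective_of_isUniformlySparse_of_injective {φ : K → ι → ℝ}
    (hφ : Continuous φ) (hinj : Injective φ) (hsparse : IsUniformlySparse φ) {j : ι → Γ}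
    (hj : Injective j) :
    ∃ F : Set (ℕ → OnePoint Γ), IsClosed F ∧ ∃ f : F → K, Continuous f ∧ Surjective f :=
  exists_isClosed_surjective_of_isUniformlySparse (hφ.extend_zero hj)
    ((extend_injective hj (0 : Γ → ℝ)).comp hinj) (hsparse.extend hj)

end Coding

theorem uniformEberlein_image_of_closed_in_onePoint_pow_general
    (K : Type u) [TopologicalSpace K] [CompactSpace K]
    (H : Type v) [NormedAddCommGroup H] [InnerProductSpace ℝ H]
    (e : K → WeakSpace ℝ H) (he : IsEmbedding e) :
    ∃ F : Set (ℕ → OnePoint (tweight K).out),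
      IsClosed F ∧ ∃ f : ↥F → K, Continuous f ∧ Function.Surjective f := by
  have : T2Space K := he.t2Space
  rcases finite_or_infinite K with hK | hK
  · obtain ⟨j⟩ : Nonempty (K ↪ (tweight K).out) := by
      rw [← Cardinal.le_def, mk_out]
      exact mk_le_tweight K
    refine exists_isClosed_surjective_of_isUniformlySparse_of_injective
      continuous_of_discreteTopology (fun k k' h => ?_) isUniformlySparse_piSingle j.injective
    simpa [Pi.single_apply, eq_comm] using congrFun h k'
  · obtain ⟨w, φ, hφ, hinj, hsparse⟩ :=
      exists_isUniformlySparse_of_weakSpace he.continuous he.injective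
    obtain ⟨B, hB, hBcard⟩ := exists_isTopologicalBasis_mk_eq_tweight K
    obtain ⟨S, ⟨g, hg⟩, hSinj⟩ := exists_injective_restrict_of_isTopologicalBasis hB hφ hinj
    obtain ⟨E⟩ : Nonempty (B × B ≃ (tweight K).out) := Cardinal.eq.1 <| by
      rw [mk_prod, lift_id, hBcard, mul_eq_self (aleph0_le_tweight K), mk_out]
    exact exists_isClosed_surjective_of_isUniformlySparse_of_injective
      (continuous_pi fun s => (continuous_apply s.1).comp hφ) hSinj
      (hsparse.comp_injective (g := ((↑) : S → w)) Subtype.val_injective) (E.injective.comp hg)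

/-- Every uniform Eberlein compactum `K` (a compact space embedding into a Hilbert
space `H` with its weak topology) is a continuous image of a closed subspace of
`α(λ)^ω`, where `α(λ)` is the one-point compactification of a discrete space of
cardinality `λ`; moreover one can take `λ` to be the weight of `K`. -/
theorem uniformEberlein_image_of_closed_in_onePoint_pow
    (K : Type u) [TopologicalSpace K] [CompactSpace K]
    (H : Type v) [NormedAddCommGroup H] [InnerProductSpace ℝ H] [CompleteSpace H]
    (e : K → WeakSpace ℝ H) (he : IsEmbedding e) :
    ∃ F : Set (ℕ → OnePoint (tweight K).out),
      IsClosed F ∧ ∃ f : ↥F → K, Continuous f ∧ Function.Surjective f :=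
  uniformEberlein_image_of_closed_in_onePoint_pow_general K H e he
end
end
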